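/- Let U, L be finite sets of natural numbers, C = U ∩ L, and S ⊆ (U \ C) ∪ (L \ C). With U' = (U \ S) ∪ (L ∩ S) and L' = (L \ S) ∪ (U ∩ S), one has GTP(U)·GTP(L) / (GTP(U')·GTP(L')) = [P(Ū,Ū)·P(L̄,L̄) / (P(Ū',Ū')·P(L̄',L̄'))] · [sf(|U'|-1)·sf(|L'|-1) / (sf(|U|-1)·sf(|L|-1))], where Ū = U\C, L̄ = L\C, Ū' = U'\C, L̄' = L'\C, P(A,B) = ∏_{(a,b)∈A×B, a<b}(b-a), and sf(m) = 1!·2!···m! is the superfactorial. Equivalently, GTP(U)·GTP(L)·P(Ū',Ū')·P(L̄',L̄')·sf(|U|-1)·sf(|L|-1) = GTP(U')·GTP(L')·P(Ū,Ū)·P(L̄,L̄)·sf(|U'|-1)·sf(|L'|-1). -/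

import Mathlib

open Finset

/-- A Gelfand–Tsetlin pattern with `n` rows: row `i` (for `i : Fin n`) has
entries `entry i 0, …, entry i i`, rows interlace, and entries beyond the
row length are normalized to `0`. -/
structure GTPattern (n : ℕ) where
  entry : Fin n → ℕ → ℕ
  interlace : ∀ i : Fin n, ∀ h : i.1 + 1 < n, ∀ j : ℕ, j ≤ i.1 →
    entry ⟨i.1 + 1, h⟩ j ≤ entry i j ∧ entry i j < entry ⟨i.1 + 1, h⟩ (j + 1)
  support : ∀ i : Fin n, ∀ j : ℕ, i.1 < j → entry i j = 0

/-- The number of Gelfand–Tsetlin patterns with `n` rows and bottom row `u`. -/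
noncomputable def GTPcount (n : ℕ) (u : Fin n → ℕ) : ℕ :=
  Nat.card {T : GTPattern n //
    ∀ j : Fin n, T.entry ⟨n - 1, Nat.sub_lt j.pos Nat.one_pos⟩ j.1 = u j}

/-- `GTP` of a finite set: patterns whose bottom row is the increasing
enumeration of `U`. -/
noncomputable def GTPfinset (U : Finset ℕ) : ℕ :=
  GTPcount U.card (fun j => ((U.orderIsoOfFin rfl j : ℕ)))

/-- `P(A,B) = ∏_{(a,b) ∈ A×B, a<b} (b-a)`. -/
def Pprod (A B : Finset ℕ) : ℕ :=
  ∏ p ∈ (A ×ˢ B).filter (fun p => p.1 < p.2), (p.2 - p.1)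

/-- The superfactorial `sf m = 1!·2!···m!`. -/
def superfactorial : ℕ → ℕ
  | 0 => 1
  | m + 1 => superfactorial m * Nat.factorial (m + 1)

/-!
Deleting the bottom row `x` of a Gelfand–Tsetlin pattern leaves a pattern whose bottom row `y`
interlaces `x` (`x j ≤ y j < x (j+1)`), so `GTP(x) = ∑_y GTP(y)`. The binomial determinants
`det ((x i).choose j)` satisfy the same recursion (subtract consecutive rows, use Pascal's rule
and multilinearity in the rows), so they agree with `GTP`; scaling column `j` by `j!` turns the
determinant into a Vandermonde determinant, whence `GTP(U) · sf(|U| - 1) = P(U, U)`.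
The theorem then becomes an identity between the products `P`: writing `U = C ∪ Ū` etc., the
cross terms between `C` and `Ū`, `L̄` only depend on `Ū ∪ L̄ = Ū' ∪ L̄'`, and cancel.
-/

def interlacingRows {n : ℕ} (x : Fin (n + 1) → ℕ) : Finset (Fin n → ℕ) :=
  Fintype.piFinset fun j => Ico (x j.castSucc) (x j.succ)

namespace GTPattern

variable {n : ℕ}

theorem ext_entry {T T' : GTPattern n} (h : T.entry = T'.entry) : T = T' := by
  cases T; cases T'; simpa using h

instance : Unique (GTPattern 0) where
  default := ⟨fun i => i.elim0, fun i => i.elim0, fun i => i.elim0⟩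
  uniq _ := ext_entry (funext fun i => i.elim0)

def bottomRow (T : GTPattern n) (j : Fin n) : ℕ :=
  T.entry ⟨n - 1, Nat.sub_lt j.pos Nat.one_pos⟩ j

def dropLast (T : GTPattern (n + 1)) : GTPattern n where
  entry i := T.entry i.castSucc
  interlace i _ := T.interlace i.castSucc (by simp)
  support i := T.support i.castSucc

theorem bottomRow_dropLast_mem (T : GTPattern (n + 1)) :
    T.dropLast.bottomRow ∈ interlacingRows T.bottomRow := by
  refine Fintype.mem_piFinset.2 fun j => Finset.mem_Ico.2 ?_
  obtain ⟨m, rfl⟩ : ∃ m, n = m + 1 := ⟨n - 1, (Nat.sub_add_cancel j.pos).symm⟩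
  exact T.interlace (⟨m, by omega⟩ : Fin (m + 2)) (by simp) j (Nat.lt_succ_iff.mp j.2)

def extend (T : GTPattern n) (x : Fin (n + 1) → ℕ) (hx : T.bottomRow ∈ interlacingRows x) :
    GTPattern (n + 1) where
  entry i j :=
    if hi : i.1 < n then T.entry ⟨i, hi⟩ j else if hj : j < n + 1 then x ⟨j, hj⟩ else 0
  interlace i h j hj := by
    have hi : i.1 < n := by omega
    by_cases hi' : i.1 + 1 < n
    · simpa [hi, hi'] using T.interlace ⟨i, hi⟩ hi' j hj
    · have hrow : (⟨i, hi⟩ : Fin n) = ⟨n - 1, by omega⟩ := Fin.ext (by simp; omega)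
      have hy := Finset.mem_Ico.1 (Fintype.mem_piFinset.1 hx ⟨j, by omega⟩)
      simp only [bottomRow, Fin.castSucc_mk, Fin.succ_mk] at hy
      simp [hi, hi', hrow, show j < n + 1 by omega, show j + 1 < n + 1 by omega, hy]
  support i j hj := by
    by_cases hi : i.1 < n
    · simpa [hi] using T.support ⟨i, hi⟩ j hj
    · simp [hi, show ¬ j < n + 1 by omega]

@[simp]
theorem dropLast_extend (T : GTPattern n) (x : Fin (n + 1) → ℕ)
    (hx : T.bottomRow ∈ interlacingRows x) : (T.extend x hx).dropLast = T :=
  ext_entry (funext fun i => by simp [dropLast, extend])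

@[simp]
theorem bottomRow_extend (T : GTPattern n) (x : Fin (n + 1) → ℕ)
    (hx : T.bottomRow ∈ interlacingRows x) : (T.extend x hx).bottomRow = x :=
  funext fun j => by simp [bottomRow, extend, (Fin.is_le j).not_gt]

theorem extend_dropLast (T : GTPattern (n + 1)) :
    T.dropLast.extend T.bottomRow T.bottomRow_dropLast_mem = T := by
  refine ext_entry (funext fun i => funext fun j => ?_)
  by_cases hi : i.1 < n
  · simp [extend, dropLast, hi]
  · obtain rfl : i = Fin.last n := Fin.ext (by simp; omega)
    by_cases hj : j < n + 1
    · simp [extend, bottomRow, Nat.lt_succ_iff.1 hj]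
      rfl
    · have hj' : n < j := by omega
      simp [extend, hj'.not_ge, T.support (Fin.last n) j hj']

def bottomRowEquiv (x : Fin (n + 1) → ℕ) :
    {T : GTPattern (n + 1) // T.bottomRow = x} ≃
      Σ y : interlacingRows x, {T : GTPattern n // T.bottomRow = y} where
  toFun T := ⟨⟨T.1.dropLast.bottomRow, by simpa only [T.2] using T.1.bottomRow_dropLast_mem⟩,
    ⟨T.1.dropLast, rfl⟩⟩
  invFun p := ⟨p.2.1.extend x (by rw [p.2.2]; exact p.1.2), bottomRow_extend _ _ _⟩
  left_inv := by
    rintro ⟨T, rfl⟩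
    exact Subtype.ext T.extend_dropLast
  right_inv := by
    rintro ⟨⟨y, hy⟩, ⟨T, hT⟩⟩
    exact Sigma.subtype_ext (Subtype.ext (by simp [hT])) (by simp)

instance finite_bottomRow_eq (u : Fin n → ℕ) : Finite {T : GTPattern n // T.bottomRow = u} := by
  induction n with
  | zero => exact Subtype.finite
  | succ n ih => exact Finite.of_equiv _ (bottomRowEquiv u).symm

end GTPattern

theorem GTPcount_eq_card {n : ℕ} (u : Fin n → ℕ) :
    GTPcount n u = Nat.card {T : GTPattern n // T.bottomRow = u} :=
  Nat.card_congr (Equiv.subtypeEquivRight fun _ => funext_iff.symm)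

theorem GTPcount_zero (u : Fin 0 → ℕ) : GTPcount 0 u = 1 := by
  rw [GTPcount_eq_card, Nat.card_eq_one_iff_unique]
  exact ⟨inferInstance, ⟨⟨default, Subsingleton.elim _ _⟩⟩⟩

theorem GTPcount_succ {n : ℕ} (x : Fin (n + 1) → ℕ) :
    GTPcount (n + 1) x = ∑ y ∈ interlacingRows x, GTPcount n y := by
  simp only [GTPcount_eq_card]
  rw [Nat.card_congr (GTPattern.bottomRowEquiv x), Nat.card_sigma]
  exact Finset.sum_coe_sort _ fun y => Nat.card {T : GTPattern n // T.bottomRow = y}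

theorem Matrix.det_eq_det_succ_sub_castSucc {R : Type*} [CommRing R] {n : ℕ}
    (M : Matrix (Fin (n + 1)) (Fin (n + 1)) R) (hM : ∀ i, M i 0 = 1) :
    M.det = (Matrix.of fun i j : Fin n => M i.succ j.succ - M i.castSucc j.succ).det := by
  let B : Matrix (Fin (n + 1)) (Fin (n + 1)) R :=
    Matrix.of fun i j => Fin.cases (M 0 j) (fun i' => M i'.succ j - M i'.castSucc j) i
  rw [Matrix.det_eq_of_forall_row_eq_smul_add_pred (A := M) (B := B) (fun _ => 1) (fun _ => rfl)
    (fun i j => by simp [B]), Matrix.det_succ_column_zero, Fin.sum_univ_succ]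
  simp [B, hM]
  rfl

def chooseMatrix {n : ℕ} (x : Fin n → ℕ) : Matrix (Fin n) (Fin n) ℤ :=
  Matrix.of fun i j => ((x i).choose j : ℤ)

theorem sum_Ico_choose {a b : ℕ} (h : a ≤ b) (j : ℕ) :
    ∑ t ∈ Ico a b, (t.choose j : ℤ) = b.choose (j + 1) - a.choose (j + 1) := by
  induction b, h using Nat.le_induction with
  | base => simp
  | succ b hb ih =>
    rw [Finset.sum_Ico_succ_top hb, ih, Nat.choose_succ_succ b j]
    push_cast
    ring

theorem det_chooseMatrix_succ {n : ℕ} (x : Fin (n + 1) → ℕ) (hx : Monotone x) :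
    (chooseMatrix x).det = ∑ y ∈ interlacingRows x, (chooseMatrix y).det := by
  have hrows : (Matrix.of fun i j : Fin n =>
      chooseMatrix x i.succ j.succ - chooseMatrix x i.castSucc j.succ) =
      fun i => ∑ t ∈ Ico (x i.castSucc) (x i.succ), fun j : Fin n => (t.choose j : ℤ) := by
    ext i j
    simp [chooseMatrix, Finset.sum_apply, sum_Ico_choose (hx i.castSucc_le_succ)]
  rw [Matrix.det_eq_det_succ_sub_castSucc _ (by simp [chooseMatrix]), hrows]
  exact (Matrix.detRowAlternating : (Fin n → ℤ) [⋀^Fin n]→ₗ[ℤ] ℤ).map_sum_finset _ _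

theorem strictMono_of_mem_interlacingRows {n : ℕ} {x : Fin (n + 1) → ℕ} (hx : Monotone x)
    {y : Fin n → ℕ} (hy : y ∈ interlacingRows x) : StrictMono y := by
  intro i j hij
  have hyi := Finset.mem_Ico.1 (Fintype.mem_piFinset.1 hy i)
  have hyj := Finset.mem_Ico.1 (Fintype.mem_piFinset.1 hy j)
  calc y i < x i.succ := hyi.2
    _ ≤ x j.castSucc := hx (Fin.succ_le_castSucc_iff.2 hij)
    _ ≤ y j := hyj.1

theorem GTPcount_eq_det_chooseMatrix {n : ℕ} (x : Fin n → ℕ) (hx : Monotone x) :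
    (GTPcount n x : ℤ) = (chooseMatrix x).det := by
  induction n with
  | zero => simp [GTPcount_zero]
  | succ n ih =>
    rw [GTPcount_succ, det_chooseMatrix_succ x hx, Nat.cast_sum]
    exact Finset.sum_congr rfl fun y hy =>
      ih y (strictMono_of_mem_interlacingRows hx hy).monotone

theorem prod_factorial_eq_superfactorial (n : ℕ) :
    ∏ j : Fin n, (j : ℕ).factorial = superfactorial (n - 1) := by
  induction n with
  | zero => simp [superfactorial]
  | succ n ih =>
    rw [Fin.prod_univ_castSucc]
    cases n with
    | zero => simp [superfactorial]
    | succ m => simp [ih, superfactorial]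

theorem det_chooseMatrix_mul_superfactorial {n : ℕ} (x : Fin n → ℕ) :
    (chooseMatrix x).det * superfactorial (n - 1) =
      ∏ i, ∏ j ∈ Ioi i, ((x j : ℤ) - x i) := by
  have hdesc : (Matrix.of fun i j : Fin n => ((j : ℕ).factorial : ℤ) * chooseMatrix x i j) =
      Matrix.of fun i (j : Fin n) => (descPochhammer ℤ j).eval (x i : ℤ) := by
    ext i j
    simp [chooseMatrix, descPochhammer_eval_eq_descFactorial,
      Nat.descFactorial_eq_factorial_mul_choose]
  have hvdm := Matrix.det_eval_matrixOfPolynomials_eq_det_vandermonde (fun i => (x i : ℤ))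
    (fun j => descPochhammer ℤ j) (fun j => descPochhammer_natDegree ℤ j)
    (fun j => monic_descPochhammer ℤ j)
  rw [← Matrix.det_vandermonde, hvdm, ← hdesc, Matrix.det_mul_row, mul_comm,
    ← prod_factorial_eq_superfactorial]
  push_cast
  rfl

theorem Pprod_map_self {n : ℕ} (f : Fin n ↪o ℕ) :
    Pprod (univ.map f.toEmbedding) (univ.map f.toEmbedding) =
      ∏ i, ∏ j ∈ Ioi i, (f j - f i) := by
  rw [Pprod, ← Finset.prodMap_map_product, Finset.filter_map, Finset.prod_map, Finset.prod_filter,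
    Finset.univ_product_univ, Fintype.prod_prod_type]
  simp [← Finset.filter_lt_eq_Ioi, Finset.prod_filter]

theorem GTPcount_mul_superfactorial {n : ℕ} (f : Fin n ↪o ℕ) :
    GTPcount n f * superfactorial (n - 1) =
      Pprod (univ.map f.toEmbedding) (univ.map f.toEmbedding) := by
  rw [Pprod_map_self]
  apply Nat.cast_injective (R := ℤ)
  push_cast [GTPcount_eq_det_chooseMatrix f f.monotone, det_chooseMatrix_mul_superfactorial]
  refine Finset.prod_congr rfl fun i _ => Finset.prod_congr rfl fun j hj => ?_
  rw [Nat.cast_sub (f.monotone (Finset.mem_Ioi.1 hj).le)]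

theorem GTPfinset_mul_superfactorial (U : Finset ℕ) :
    GTPfinset U * superfactorial (U.card - 1) = Pprod U U := by
  simpa [GTPfinset] using GTPcount_mul_superfactorial (U.orderEmbOfFin rfl)

theorem Pprod_union_left {A B : Finset ℕ} (h : Disjoint A B) (C : Finset ℕ) :
    Pprod (A ∪ B) C = Pprod A C * Pprod B C := by
  rw [Pprod, Pprod, Pprod, Finset.union_product, Finset.filter_union, Finset.prod_union]
  exact Finset.disjoint_filter_filter (Finset.disjoint_product.2 (Or.inl h))

theorem Pprod_union_right (A : Finset ℕ) {B C : Finset ℕ} (h : Disjoint B C) :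
    Pprod A (B ∪ C) = Pprod A B * Pprod A C := by
  rw [Pprod, Pprod, Pprod, Finset.product_union, Finset.filter_union, Finset.prod_union]
  exact Finset.disjoint_filter_filter (Finset.disjoint_product.2 (Or.inr h))

theorem Pprod_union_self {A B : Finset ℕ} (h : Disjoint A B) :
    Pprod (A ∪ B) (A ∪ B) = Pprod A A * Pprod B B * (Pprod A B * Pprod B A) := by
  rw [Pprod_union_left h, Pprod_union_right _ h, Pprod_union_right _ h]
  ring

theorem Pprod_union_self_shuffle {C D E D' E' : Finset ℕ} (hDE : Disjoint D E)
    (hD'E' : Disjoint D' E') (hC : Disjoint C (D ∪ E)) (h : D ∪ E = D' ∪ E') :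
    Pprod (C ∪ D) (C ∪ D) * Pprod (C ∪ E) (C ∪ E) * Pprod D' D' * Pprod E' E' =
      Pprod (C ∪ D') (C ∪ D') * Pprod (C ∪ E') (C ∪ E') * Pprod D D * Pprod E E := by
  have cross_eq (D E : Finset ℕ) (hDE : Disjoint D E) :
      Pprod C D * Pprod D C * (Pprod C E * Pprod E C) = Pprod C (D ∪ E) * Pprod (D ∪ E) C := by
    rw [Pprod_union_left hDE, Pprod_union_right _ hDE]
    ring
  obtain ⟨hCD, hCE⟩ := disjoint_union_right.1 hC
  obtain ⟨hCD', hCE'⟩ := disjoint_union_right.1 (h ▸ hC)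
  rw [Pprod_union_self hCD, Pprod_union_self hCE, Pprod_union_self hCD', Pprod_union_self hCE']
  calc _ = Pprod C C ^ 2 * Pprod D D * Pprod E E * Pprod D' D' * Pprod E' E' *
        (Pprod C D * Pprod D C * (Pprod C E * Pprod E C)) := by ring
    _ = Pprod C C ^ 2 * Pprod D D * Pprod E E * Pprod D' D' * Pprod E' E' *
        (Pprod C D' * Pprod D' C * (Pprod C E' * Pprod E' C)) := by
      rw [cross_eq D E hDE, cross_eq D' E' hD'E', h]
    _ = _ := by ring

theorem stmt_9_general (U L S : Finset ℕ) :
    GTPfinset U * GTPfinset L *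
        Pprod (((U \ S) ∪ (L ∩ S)) \ (U ∩ L)) (((U \ S) ∪ (L ∩ S)) \ (U ∩ L)) *
        Pprod (((L \ S) ∪ (U ∩ S)) \ (U ∩ L)) (((L \ S) ∪ (U ∩ S)) \ (U ∩ L)) *
        superfactorial (U.card - 1) * superfactorial (L.card - 1) =
      GTPfinset ((U \ S) ∪ (L ∩ S)) * GTPfinset ((L \ S) ∪ (U ∩ S)) *
        Pprod (U \ (U ∩ L)) (U \ (U ∩ L)) * Pprod (L \ (U ∩ L)) (L \ (U ∩ L)) *
        superfactorial (((U \ S) ∪ (L ∩ S)).card - 1) *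
        superfactorial (((L \ S) ∪ (U ∩ S)).card - 1) := by
  set C := U ∩ L
  set U' := (U \ S) ∪ (L ∩ S)
  set L' := (L \ S) ∪ (U ∩ S)
  have key := Pprod_union_self_shuffle (C := C) (D := U \ C) (E := L \ C) (D' := U' \ C)
    (E' := L' \ C) (by rw [disjoint_left]; grind) (by rw [disjoint_left]; grind)
    (by rw [disjoint_left]; grind) (by grind)
  rw [union_sdiff_of_subset (by grind), union_sdiff_of_subset (by grind),
    union_sdiff_of_subset (by grind), union_sdiff_of_subset (by grind),
    ← GTPfinset_mul_superfactorial U, ← GTPfinset_mul_superfactorial L,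
    ← GTPfinset_mul_superfactorial U', ← GTPfinset_mul_superfactorial L'] at key
  linarith

/-- The shuffling theorem for GTP counts, in equational (division-free) form. -/
theorem stmt_9 (U L S : Finset ℕ)
    (hS : S ⊆ (U \ (U ∩ L)) ∪ (L \ (U ∩ L))) :
    GTPfinset U * GTPfinset L *
        Pprod (((U \ S) ∪ (L ∩ S)) \ (U ∩ L)) (((U \ S) ∪ (L ∩ S)) \ (U ∩ L)) *
        Pprod (((L \ S) ∪ (U ∩ S)) \ (U ∩ L)) (((L \ S) ∪ (U ∩ S)) \ (U ∩ L)) *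
        superfactorial (U.card - 1) * superfactorial (L.card - 1) =
      GTPfinset ((U \ S) ∪ (L ∩ S)) * GTPfinset ((L \ S) ∪ (U ∩ S)) *
        Pprod (U \ (U ∩ L)) (U \ (U ∩ L)) * Pprod (L \ (U ∩ L)) (L \ (U ∩ L)) *
        superfactorial (((U \ S) ∪ (L ∩ S)).card - 1) *
        superfactorial (((L \ S) ∪ (U ∩ S)).card - 1) :=
  stmt_9_general U L S
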